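/- Fix s ∈ (0, 1). The series u(s) := Σ_k λ_k^{−s} ⟨f, ψ_k⟩ ψ_k converges in H, the H-valued map y ↦ e^{(1−s)y} w(y) is Bochner integrable on ℝ, where w(y) := Σ_k (e^y + λ_k)^{−1} ⟨f, ψ_k⟩ ψ_k, and the Balakrishnan representation u(s) = (sin(sπ)/π) ∫_{−∞}^{∞} e^{(1−s)y} w(y) dy holds. -/

import Mathlib

/-!
For a single eigenvalue `c > 0` the identity is the scalar integral
`∫ e^{(1-s)y} / (e^y + c) dy = c^{-s} π / sin (π s)`: the substitution `x = e^y / (e^y + c)`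
turns it into `c^{-s} B(1-s, s)`, and `B(1-s, s) = Γ(1-s) Γ(s) = π / sin (π s)` by the
reflection formula. Summing over `k` gives the identity for every partial sum of the series.
The coefficients of `w(y)` are only square summable, so the series cannot be integrated
termwise; instead, since `(e^y + λ_k)⁻¹ ≤ (e^y + λ_1)⁻¹`, Bessel's inequality dominates every
partial sum of `e^{(1-s)y} w(y)` by the integrable function `e^{(1-s)y} (e^y + λ_1)⁻¹ ‖f‖`,
and dominated convergence passes to the limit.
-/

open RealInnerProductSpace MeasureTheory Real Set Filter Topology

lemma complex_beta_kernel_eq_ofReal {a b x : ℝ} (hx : x ∈ Ioc (0 : ℝ) 1) :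
    (x : ℂ) ^ ((a : ℂ) - 1) * (1 - (x : ℂ)) ^ ((b : ℂ) - 1)
      = ((x ^ (a - 1) * (1 - x) ^ (b - 1) : ℝ) : ℂ) := by
  rw [Complex.ofReal_mul, Complex.ofReal_cpow hx.1.le, Complex.ofReal_cpow (by linarith [hx.2])]
  push_cast
  rfl

lemma integrableOn_rpow_mul_one_sub_rpow {a b : ℝ} (ha : 0 < a) (hb : 0 < b) :
    IntegrableOn (fun x : ℝ => x ^ (a - 1) * (1 - x) ^ (b - 1)) (Ioo 0 1) := by
  have h := Complex.betaIntegral_convergent (u := a) (v := b) (by simpa) (by simpa)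
  rw [intervalIntegrable_iff_integrableOn_Ioc_of_le zero_le_one,
    integrableOn_congr_fun (fun x hx => complex_beta_kernel_eq_ofReal hx) measurableSet_Ioc] at h
  have h' := h.re
  simp only [RCLike.re_to_complex, Complex.ofReal_re] at h'
  exact IntegrableOn.mono_set h' Ioo_subset_Ioc_self

lemma integral_rpow_mul_one_sub_rpow {a b : ℝ} (ha : 0 < a) (hb : 0 < b) :
    ∫ x in Ioo (0 : ℝ) 1, x ^ (a - 1) * (1 - x) ^ (b - 1) = Gamma a * Gamma b / Gamma (a + b) := by
  have h := Complex.betaIntegral_eq_Gamma_mul_div a b (by simpa) (by simpa)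
  rw [Complex.betaIntegral, intervalIntegral.integral_of_le zero_le_one,
    setIntegral_congr_fun measurableSet_Ioc (fun x hx => complex_beta_kernel_eq_ofReal hx),
    integral_Ioc_eq_integral_Ioo, integral_complex_ofReal, ← Complex.ofReal_add,
    Complex.Gamma_ofReal, Complex.Gamma_ofReal, Complex.Gamma_ofReal] at h
  exact_mod_cast h

lemma image_exp_div_exp_add {c : ℝ} (hc : 0 < c) :
    (fun y => exp y / (exp y + c)) '' univ = Ioo 0 1 := by
  ext x
  simp only [image_univ, mem_range, mem_Ioo]
  constructor
  · rintro ⟨y, rfl⟩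
    have := exp_pos y
    exact ⟨by positivity, (div_lt_one (by positivity)).2 (by linarith)⟩
  · rintro ⟨hx0, hx1⟩
    have h : 0 < c * x / (1 - x) := div_pos (mul_pos hc hx0) (by linarith)
    refine ⟨log (c * x / (1 - x)), ?_⟩
    rw [exp_log h]
    field_simp
    ring

lemma injective_exp_div_exp_add {c : ℝ} (hc : 0 < c) :
    Function.Injective fun y => exp y / (exp y + c) := by
  intro a b hab
  have ha := exp_pos a
  have hb := exp_pos b
  simp only at hab
  field_simp at hab
  exact exp_injective (mul_left_cancel₀ hc.ne' (by linarith))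

lemma hasDerivAt_exp_div_exp_add {c : ℝ} (hc : 0 < c) (y : ℝ) :
    HasDerivAt (fun y => exp y / (exp y + c)) (c * exp y / (exp y + c) ^ 2) y := by
  have hD : exp y + c ≠ 0 := by positivity
  refine ((hasDerivAt_exp y).div ((hasDerivAt_exp y).add_const c) hD).congr_deriv ?_
  ring

lemma exp_mul_inv_exp_add_eq {c s : ℝ} (hc : 0 < c) (y : ℝ) :
    exp ((1 - s) * y) * (exp y + c)⁻¹ = c ^ (-s) * (|c * exp y / (exp y + c) ^ 2| *
      ((exp y / (exp y + c)) ^ (-s) * (1 - exp y / (exp y + c)) ^ (s - 1))) := by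
  have hE := exp_pos y
  have hD : 0 < exp y + c := by positivity
  have h1 : 1 - exp y / (exp y + c) = c / (exp y + c) := by field_simp; ring
  have h2 : exp ((1 - s) * y) = exp y / exp y ^ s := by
    rw [← exp_mul, ← exp_sub]; ring_nf
  rw [h1, h2, abs_of_pos (by positivity), div_rpow hE.le hD.le, div_rpow hc.le hD.le,
    rpow_sub hc, rpow_sub hD, rpow_neg hc.le, rpow_neg hE.le, rpow_neg hD.le, rpow_one, rpow_one]
  have := rpow_pos_of_pos hE s
  have := rpow_pos_of_pos hD s
  have := rpow_pos_of_pos hc s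
  field_simp

lemma integrableOn_Ioo_iff_integrable_comp_exp_div_exp_add {c : ℝ} (hc : 0 < c) (g : ℝ → ℝ) :
    IntegrableOn g (Ioo 0 1) ↔
      Integrable fun y => |c * exp y / (exp y + c) ^ 2| * g (exp y / (exp y + c)) := by
  rw [← image_exp_div_exp_add hc, integrableOn_image_iff_integrableOn_abs_deriv_smul
    MeasurableSet.univ (fun y _ => (hasDerivAt_exp_div_exp_add hc y).hasDerivWithinAt)
    (injective_exp_div_exp_add hc).injOn, integrableOn_univ]
  rfl

lemma setIntegral_Ioo_eq_integral_comp_exp_div_exp_add {c : ℝ} (hc : 0 < c) (g : ℝ → ℝ) :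
    ∫ x in Ioo 0 1, g x =
      ∫ y, |c * exp y / (exp y + c) ^ 2| * g (exp y / (exp y + c)) := by
  rw [← image_exp_div_exp_add hc, integral_image_eq_integral_abs_deriv_smul
    MeasurableSet.univ (fun y _ => (hasDerivAt_exp_div_exp_add hc y).hasDerivWithinAt)
    (injective_exp_div_exp_add hc).injOn, setIntegral_univ]
  rfl

section Kernel

variable {c s : ℝ}

lemma integrable_exp_mul_inv_exp_add (hc : 0 < c) (hs : s ∈ Ioo 0 1) :
    Integrable fun y => exp ((1 - s) * y) * (exp y + c)⁻¹ := by
  have h := integrableOn_rpow_mul_one_sub_rpow (a := 1 - s) (b := s) (by linarith [hs.2]) hs.1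
  rw [sub_sub_cancel_left, integrableOn_Ioo_iff_integrable_comp_exp_div_exp_add hc] at h
  simpa only [exp_mul_inv_exp_add_eq hc] using h.const_mul (c ^ (-s))

lemma integral_exp_mul_inv_exp_add (hc : 0 < c) (hs : s ∈ Ioo 0 1) :
    ∫ y, exp ((1 - s) * y) * (exp y + c)⁻¹ = c ^ (-s) * (π / sin (π * s)) := by
  have h := integral_rpow_mul_one_sub_rpow (a := 1 - s) (b := s) (by linarith [hs.2]) hs.1
  rw [sub_sub_cancel_left, setIntegral_Ioo_eq_integral_comp_exp_div_exp_add hc, sub_add_cancel,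
    Gamma_one, div_one, mul_comm, Gamma_mul_Gamma_one_sub] at h
  simp only [exp_mul_inv_exp_add_eq hc, integral_const_mul, h]

lemma integral_exp_smul_sum_inv_exp_add_smul {ι E : Type*} [NormedAddCommGroup E]
    [NormedSpace ℝ E] [CompleteSpace E] (hs : s ∈ Ioo 0 1) {lam : ι → ℝ}
    (a : ι → ℝ) (v : ι → E) {t : Finset ι} (hlam : ∀ i ∈ t, 0 < lam i) :
    ∫ y, exp ((1 - s) * y) • ∑ i ∈ t, ((exp y + lam i)⁻¹ * a i) • v i =
      (π / sin (π * s)) • ∑ i ∈ t, (lam i ^ (-s) * a i) • v i := by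
  have hterm : ∀ i ∈ t, ∫ y, (exp ((1 - s) * y) * (exp y + lam i)⁻¹ * a i) • v i =
      (π / sin (π * s) * lam i ^ (-s) * a i) • v i := fun i hi => by
    rw [integral_smul_const, integral_mul_const, integral_exp_mul_inv_exp_add (hlam i hi) hs,
      mul_comm (lam i ^ (-s))]
  simp_rw [Finset.smul_sum, smul_smul, ← mul_assoc]
  rw [integral_finsetSum _ fun i hi =>
    (((integrable_exp_mul_inv_exp_add (hlam i hi) hs).mul_const _).smul_const _)]
  exact Finset.sum_congr rfl hterm

end Kernel

lemma sq_mul_le_of_abs_le {a M : ℝ} (ha : |a| ≤ M) (x : ℝ) : (a * x) ^ 2 ≤ M ^ 2 * x ^ 2 := by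
  rw [mul_pow]
  exact mul_le_mul_of_nonneg_right (sq_le_sq.2 (ha.trans (le_abs_self M))) (sq_nonneg x)

section Orthonormal

variable {ι H : Type*} [NormedAddCommGroup H] [InnerProductSpace ℝ H] {ψ : ι → H}
  {m : ι → ℝ} {M : ℝ}

lemma Orthonormal.norm_sum_smul_sq (hψ : Orthonormal ℝ ψ) (a : ι → ℝ) (t : Finset ι) :
    ‖∑ i ∈ t, a i • ψ i‖ ^ 2 = ∑ i ∈ t, a i ^ 2 := by
  simpa [Real.norm_eq_abs, sq_abs] using hψ.orthogonalFamily.norm_sum a t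

lemma Orthonormal.sum_inner_sq_le (hψ : Orthonormal ℝ ψ) (f : H) (t : Finset ι) :
    ∑ i ∈ t, ⟪f, ψ i⟫ ^ 2 ≤ ‖f‖ ^ 2 := by
  simpa [Real.norm_eq_abs, sq_abs, real_inner_comm] using hψ.sum_inner_products_le f (s := t)

lemma Orthonormal.summable_inner_sq (hψ : Orthonormal ℝ ψ) (f : H) :
    Summable fun i => ⟪f, ψ i⟫ ^ 2 := by
  simpa [Real.norm_eq_abs, sq_abs, real_inner_comm] using hψ.inner_products_summable f

lemma Orthonormal.norm_sum_mul_inner_smul_le (hψ : Orthonormal ℝ ψ) (f : H)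
    (hm : ∀ i, |m i| ≤ M) (hM : 0 ≤ M) (t : Finset ι) :
    ‖∑ i ∈ t, (m i * ⟪f, ψ i⟫) • ψ i‖ ≤ M * ‖f‖ := by
  refine (pow_le_pow_iff_left₀ (norm_nonneg _) (by positivity) two_ne_zero).1 ?_
  calc ‖∑ i ∈ t, (m i * ⟪f, ψ i⟫) • ψ i‖ ^ 2 = ∑ i ∈ t, (m i * ⟪f, ψ i⟫) ^ 2 :=
        hψ.norm_sum_smul_sq _ t
    _ ≤ ∑ i ∈ t, M ^ 2 * ⟪f, ψ i⟫ ^ 2 :=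
        Finset.sum_le_sum fun i _ => sq_mul_le_of_abs_le (hm i) _
    _ ≤ (M * ‖f‖) ^ 2 := by
        rw [← Finset.mul_sum, mul_pow]
        exact mul_le_mul_of_nonneg_left (hψ.sum_inner_sq_le f t) (sq_nonneg M)

variable [CompleteSpace H]

lemma Orthonormal.summable_mul_inner_smul (hψ : Orthonormal ℝ ψ) (f : H) (hm : ∀ i, |m i| ≤ M) :
    Summable fun i => (m i * ⟪f, ψ i⟫) • ψ i := by
  have h := (hψ.orthogonalFamily.summable_iff_norm_sq_summable fun i => m i * ⟪f, ψ i⟫).2 <|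
    ((hψ.summable_inner_sq f).mul_left (M ^ 2)).of_nonneg_of_le (fun _ => sq_nonneg _)
      fun i => by simpa only [Real.norm_eq_abs, sq_abs] using sq_mul_le_of_abs_le (hm i) _
  simpa using h

end Orthonormal

lemma integrable_of_dominated_convergence {α G : Type*} [MeasurableSpace α] {μ : Measure α}
    [NormedAddCommGroup G] {F : ℕ → α → G} {f : α → G} (bound : α → ℝ)
    (F_measurable : ∀ n, AEStronglyMeasurable (F n) μ) (bound_integrable : Integrable bound μ)
    (h_bound : ∀ n, ∀ᵐ a ∂μ, ‖F n a‖ ≤ bound a)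
    (h_lim : ∀ᵐ a ∂μ, Tendsto (fun n => F n a) atTop (𝓝 (f a))) :
    Integrable f μ := by
  refine bound_integrable.mono' (aestronglyMeasurable_of_tendsto_ae _ F_measurable h_lim) ?_
  filter_upwards [h_lim, ae_all_iff.2 h_bound] with a ha hb
  exact le_of_tendsto' ha.norm hb

lemma abs_rpow_neg_le_of_le {a b s : ℝ} (ha : 0 < a) (hab : a ≤ b) (hs : 0 ≤ s) :
    |b ^ (-s)| ≤ a ^ (-s) := by
  rw [abs_of_nonneg (rpow_nonneg (ha.trans_le hab).le _)]
  exact rpow_le_rpow_of_nonpos ha hab (neg_nonpos.2 hs)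

lemma abs_inv_add_le_of_le {a b t : ℝ} (ha : 0 < a) (ht : 0 ≤ t) (hab : a ≤ b) :
    |(t + b)⁻¹| ≤ (t + a)⁻¹ := by
  rw [abs_of_pos (inv_pos.2 (by linarith))]
  exact inv_anti₀ (by linarith) (by linarith)

/-- The Balakrishnan representation of the spectral fractional operator:
`u(s) = (sin(sπ)/π) ∫_ℝ e^{(1-s)y} w(y) dy`, where
`u(s) = Σ_k λ_k^{-s} ⟨f, ψ_k⟩ ψ_k` and `w(y) = Σ_k (e^y + λ_k)⁻¹ ⟨f, ψ_k⟩ ψ_k`. -/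
theorem stmt_14
    {H : Type*} [NormedAddCommGroup H] [InnerProductSpace ℝ H] [CompleteSpace H]
    (ψ : ℕ → H) (hψ : Orthonormal ℝ ψ)
    (lam : ℕ → ℝ) (hlam1 : 0 < lam 1) (hlam : ∀ k, lam 1 ≤ lam k)
    (f : H) (s : ℝ) (hs : s ∈ Set.Ioo (0 : ℝ) 1) :
    Summable (fun k : ℕ => (lam k ^ (-s) * ⟪f, ψ k⟫) • ψ k) ∧
    Integrable (fun y : ℝ =>
      Real.exp ((1 - s) * y) • ∑' k : ℕ, ((Real.exp y + lam k)⁻¹ * ⟪f, ψ k⟫) • ψ k) ∧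
    (∑' k : ℕ, (lam k ^ (-s) * ⟪f, ψ k⟫) • ψ k) =
      (Real.sin (s * Real.pi) / Real.pi) •
        ∫ y : ℝ, Real.exp ((1 - s) * y) •
          ∑' k : ℕ, ((Real.exp y + lam k)⁻¹ * ⟪f, ψ k⟫) • ψ k := by
  have hlam_pos k : 0 < lam k := hlam1.trans_le (hlam k)
  have hres_le y k : |(exp y + lam k)⁻¹| ≤ (exp y + lam 1)⁻¹ :=
    abs_inv_add_le_of_le hlam1 (exp_pos y).le (hlam k)
  have hu := hψ.summable_mul_inner_smul f fun k => abs_rpow_neg_le_of_le hlam1 (hlam k) hs.1.le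
  set F : ℕ → ℝ → H := fun n y =>
    exp ((1 - s) * y) • ∑ k ∈ Finset.range n, ((exp y + lam k)⁻¹ * ⟪f, ψ k⟫) • ψ k
  set bound : ℝ → ℝ := fun y => exp ((1 - s) * y) * (exp y + lam 1)⁻¹ * ‖f‖
  have hF_meas n : AEStronglyMeasurable (F n) := by
    refine Continuous.aestronglyMeasurable ?_
    fun_prop (disch := exact fun y => (add_pos (exp_pos y) (hlam_pos _)).ne')
  have hF_le n : ∀ᵐ y, ‖F n y‖ ≤ bound y := ae_of_all _ fun y => by
    rw [norm_smul, norm_of_nonneg (exp_pos _).le, show bound y = _ * (_ * ‖f‖) from mul_assoc ..]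
    exact mul_le_mul_of_nonneg_left (hψ.norm_sum_mul_inner_smul_le f (hres_le y)
      (inv_pos.2 (add_pos (exp_pos y) hlam1)).le _) (exp_pos _).le
  have hF_lim : ∀ᵐ y, Tendsto (fun n => F n y) atTop (𝓝 (exp ((1 - s) * y) •
      ∑' k, ((exp y + lam k)⁻¹ * ⟪f, ψ k⟫) • ψ k)) := ae_of_all _ fun y =>
    ((hψ.summable_mul_inner_smul f (hres_le y)).hasSum.tendsto_sum_nat).const_smul _
  have hbound : Integrable bound := (integrable_exp_mul_inv_exp_add hlam1 hs).mul_const _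
  have hint := tendsto_integral_of_dominated_convergence bound hF_meas hbound hF_le hF_lim
  simp only [F, integral_exp_smul_sum_inv_exp_add_smul hs _ _ fun k _ => hlam_pos k] at hint
  have hsin : sin (π * s) ≠ 0 :=
    (sin_pos_of_pos_of_lt_pi (mul_pos pi_pos hs.1) (mul_lt_of_lt_one_right pi_pos hs.2)).ne'
  refine ⟨hu, integrable_of_dominated_convergence bound hF_meas hbound hF_le hF_lim, ?_⟩
  rw [← tendsto_nhds_unique (hu.hasSum.tendsto_sum_nat.const_smul _) hint, smul_smul,
    mul_comm s π, div_mul_div_cancel₀ pi_ne_zero, div_self hsin, one_smul]
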